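/- arXiv:1406.5678 — 4 statements merged into one kernel-verified Lean document; each statement's English description precedes it below -/
import Mathlib

section
/- Let (𝔤, [·,·], J) be a complex A-Lie algebra of derivation type with ∂̄ defined by (∂̄W)(V) = ½([V,W] + J[JV,W]) + ¼ N(V,W). Then ∂̄ commutes with J: (∂̄(JW))(V) = J((∂̄W)(V)) for all V, W ∈ 𝔤. -/
/-- A complex A-Lie algebra of derivation type: A is a commutative ℝ-algebra with unit,
g an A-module of derivations of A with a Lie bracket satisfying the Leibniz rule
[aV,W] = a[V,W] − (Wa)V, and J an A-linear complex structure on g. -/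
structure CplxDerLie (A : Type*) [CommRing A] [Algebra ℝ A]
    (g : Type*) [AddCommGroup g] [Module ℝ g] [Module A g] [IsScalarTower ℝ A g] where
  bracket : g → g → g
  act : g → A → A
  bracket_add_left : ∀ u v w, bracket (u + v) w = bracket u w + bracket v w
  bracket_skew : ∀ v w, bracket v w = - bracket w v
  leibniz : ∀ (a : A) (v w : g), bracket (a • v) w = a • bracket v w - (act w a) • v
  J : g →ₗ[A] g
  J_sq : ∀ v, J (J v) = -v

variable {A : Type*} [CommRing A] [Algebra ℝ A]
  {g : Type*} [AddCommGroup g] [Module ℝ g] [Module A g] [IsScalarTower ℝ A g]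

/-- The Nijenhuis tensor N(V,W) = [JV,JW] − [V,W] − J[JV,W] − J[V,JW]. -/
def nijenhuis (D : CplxDerLie A g) (v w : g) : g :=
  D.bracket (D.J v) (D.J w) - D.bracket v w
    - D.J (D.bracket (D.J v) w) - D.J (D.bracket v (D.J w))

/-- The operator (∂̄W)(V) = ½([V,W] + J[JV,W]) + ¼ N(V,W). -/
noncomputable def dbarOp (D : CplxDerLie A g) (w v : g) : g :=
  (2 : ℝ)⁻¹ • (D.bracket v w + D.J (D.bracket (D.J v) w))
    + (4 : ℝ)⁻¹ • nijenhuis D v w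

/-! Expanding the Nijenhuis tensor gives
`(∂̄W)(V) = ¼ ([V,W] + [JV,JW] + J[JV,W] − J[V,JW])`; substituting `JW` for `W` and using
`J² = -1` and skew-symmetry of the bracket turns this into `J` applied to the same expression. -/

namespace CplxDerLie

variable (D : CplxDerLie A g)

def bracketLeft (x : g) : g →+ g :=
  AddMonoidHom.mk' (D.bracket · x) fun u v => D.bracket_add_left u v x

lemma bracket_neg_left (u x : g) : D.bracket (-u) x = -D.bracket u x :=
  map_neg (D.bracketLeft x) u

lemma bracket_neg_right (x w : g) : D.bracket x (-w) = -D.bracket x w := by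
  rw [D.bracket_skew, bracket_neg_left, neg_neg, D.bracket_skew w x]

end CplxDerLie

lemma dbarOp_eq (D : CplxDerLie A g) (w v : g) :
    dbarOp D w v = (4 : ℝ)⁻¹ • (D.bracket v w + D.bracket (D.J v) (D.J w)
      + D.J (D.bracket (D.J v) w) - D.J (D.bracket v (D.J w))) := by
  rw [dbarOp, nijenhuis]
  module

/-- ∂̄ commutes with J: (∂̄(JW))(V) = J((∂̄W)(V)). -/
theorem stmt_5 (D : CplxDerLie A g) (v w : g) :
    dbarOp D (D.J w) v = D.J (dbarOp D w v) := by
  rw [dbarOp_eq, dbarOp_eq]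
  simp only [D.J_sq, D.bracket_neg_right, map_add, map_sub, map_neg, LinearMap.map_smul_of_tower]
  module
end

section
/- Let (𝔤, [·,·], J) be a complex A-Lie algebra of derivation type. Then ∂̄ satisfies the Leibniz rule: for a ∈ A, W, V ∈ 𝔤, (∂̄(aW))(V) = ½((Va)W + (JVa)JW) + a(∂̄W)(V). -/
variable {A : Type*} [CommRing A] [Algebra ℝ A]
  {g : Type*} [AddCommGroup g] [Module ℝ g] [Module A g] [IsScalarTower ℝ A g]

/-- Leibniz rule: (∂̄(aW))(V) = ½((Va)W + (JVa)JW) + a(∂̄W)(V). -/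
theorem stmt_6 (D : CplxDerLie A g) (a : A) (v w : g) :
    dbarOp D (a • w) v
      = (2 : ℝ)⁻¹ • ((D.act v a) • w + (D.act (D.J v) a) • (D.J w))
        + a • dbarOp D w v := by
  have br : ∀ (u x : g), D.bracket u (a • x)
      = a • D.bracket u x + (D.act u a) • x := by
    intro u x
    rw [D.bracket_skew, D.leibniz, D.bracket_skew x u]
    module
  have hJ : D.J (a • w) = a • D.J w := D.J.map_smul a w
  have hN : nijenhuis D v (a • w) = a • nijenhuis D v w := by
    simp only [nijenhuis, hJ, br, map_add, map_smul, map_sub, D.J_sq]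
    module
  simp only [dbarOp, hN, hJ, br, map_add, map_smul]
  module
end

section
/- Let (ξ, J) be a Levi flat structure on L with DGLA defining couple (γ, X), and let α ∈ Z¹(L) (i.e. α is a 1-form with ι_X α = 0) satisfy the Maurer–Cartan equation δα + ½{α,α} = 0 where δ = d + {γ, ·}. Define T(V) = [V,X] − γ([V,X])X and [V,W]_α = ω_α^{-1}[ω_α V, ω_α W] with ω_α(V) = V − α(V) X. Then for all sections V, W of ξ: [V,W]_α = [V,W] + α(V) T(W) − α(W) T(V). -/
/-- For α ∈ Z¹(L) satisfying the Maurer–Cartan equation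
δα + ½{α,α} = 0, with T(V) = [V,X] − γ([V,X])X, ω_α(V) = V − α(V)X and
[V,W]_α = ω_α⁻¹[ω_α V, ω_α W], one has, for sections V, W of ξ:
[V,W]_α = [V,W] + α(V) T(W) − α(W) T(V). -/
theorem stmt_15 {R : Type*} [CommRing R] [Algebra ℝ R]
    {g : Type*} [AddCommGroup g] [Module R g]
    (act : g → Derivation ℝ R R) (bracket : g → g → g)
    (hskew : ∀ v w, bracket v w = - bracket w v)
    (hadd : ∀ u v w, bracket (u + v) w = bracket u w + bracket v w)
    (hleib : ∀ (a : R) (v w : g), bracket (a • v) w = a • bracket v w - (act w a) • v)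
    (γ α : g →ₗ[R] R) (X : g) (hX : γ X = 1) (hαX : α X = 0)
    -- exterior derivative of a 1-form (Koszul formula)
    (df : (g →ₗ[R] R) → g → g → R)
    (hdf : ∀ ω v w, df ω v w = act v (ω w) - act w (ω v) - ω (bracket v w))
    -- Maurer–Cartan equation: dα + ι_X dα ∧ α + ι_X dγ ∧ α − γ ∧ ι_X dα = 0
    (hMC : ∀ v w, df α v w
        + (df α X v * α w - df α X w * α v)
        + (df γ X v * α w - df γ X w * α v)
        - (γ v * df α X w - γ w * df α X v) = 0)
    (V W : g) (hV : γ V = 0) (hW : γ W = 0) :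
    bracket (V - α V • X) (W - α W • X)
        + α (bracket (V - α V • X) (W - α W • X)) • X
      = bracket V W
        + α V • (bracket W X - γ (bracket W X) • X)
        - α W • (bracket V X - γ (bracket V X) • X) := by
  have hzero : ∀ w : g, bracket 0 w = 0 := by
    intro w; simpa using hleib 0 w w
  have hneg : ∀ v w : g, bracket (-v) w = -bracket v w := by
    intro v w
    have h := hadd v (-v) w
    rw [add_neg_cancel, hzero] at h
    exact eq_neg_of_add_eq_zero_left (by rw [add_comm]; exact h.symm)
  have hsubl : ∀ u v w : g, bracket (u - v) w = bracket u w - bracket v w := by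
    intro u v w; rw [sub_eq_add_neg, hadd, hneg, ← sub_eq_add_neg]
  have hsmulr : ∀ (c : R) (v w : g), bracket v (c • w) = c • bracket v w + (act v c) • w := by
    intro c v w
    rw [hskew v (c • w), hleib c w v, hskew w v]
    module
  have hsubr : ∀ u v w : g, bracket u (v - w) = bracket u v - bracket u w := by
    intro u v w
    rw [hskew u (v - w), hsubl, hskew v u, hskew w u]
    module
  have hXX : bracket X X = 0 := by
    have h : bracket X X + bracket X X = 0 := by
      nth_rewrite 1 [hskew X X]; exact neg_add_cancel _
    have hc : (algebraMap ℝ R (1/2)) * 2 = 1 := by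
      rw [show (2:R) = algebraMap ℝ R 2 from (map_ofNat (algebraMap ℝ R) 2).symm, ← map_mul]
      norm_num
    calc bracket X X = ((algebraMap ℝ R (1/2)) * 2) • bracket X X := by rw [hc, one_smul]
      _ = (algebraMap ℝ R (1/2)) • (bracket X X + bracket X X) := by rw [mul_smul, two_smul]
      _ = 0 := by rw [h, smul_zero]
  have hXbX : ∀ c : R, bracket X (c • X) = (act X c) • X := by
    intro c; rw [hsmulr, hXX, smul_zero, zero_add]
  have hcomp : ∀ c : R, act (c • X) (α V) = c * act X (α V) := by
    intro c
    have hmc := hMC V (c • X)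
    simp only [hdf, hXbX, hsmulr, hskew X V, map_add, map_sub, map_smul, map_neg,
      smul_eq_mul, hαX, hX, hV, mul_zero, zero_mul, mul_one, map_zero,
      Derivation.map_one_eq_zero, sub_zero, zero_sub, add_zero, zero_add, mul_neg, neg_neg,
      neg_zero, sub_self] at hmc
    linear_combination -hmc
  have hQ : bracket (α V • X) (α W • X) = (α V * act X (α W) - α W * act X (α V)) • X := by
    rw [hleib, hXbX, hcomp, smul_smul, sub_smul]
  have hB : bracket (V - α V • X) (W - α W • X)
      = bracket V W - α W • bracket V X + α V • bracket W X
        + (act W (α V) - act V (α W) + (α V * act X (α W) - α W * act X (α V))) • X := by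
    rw [hsubl, hsubr, hsubr, hsmulr, hleib (α V) X W, hQ, hskew X W]
    module
  rw [hB]
  have hmc := hMC V W
  simp only [hdf, hskew X V, hskew X W, map_add, map_sub, map_smul, map_neg, smul_eq_mul,
    hαX, hX, hV, hW, mul_zero, zero_mul, mul_one, map_zero, Derivation.map_one_eq_zero,
    sub_zero, zero_sub, add_zero, zero_add, neg_neg, neg_zero, sub_self] at hmc
  simp only [map_add, map_sub, map_smul, smul_eq_mul, hαX, mul_zero, add_zero, sub_zero]
  match_scalars
  · ring
  · ring
  · ring
  · linear_combination -hmc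
end

section
/- Let (γ, X) and (γ̂, X̂) be DGLA defining couples for the same integrable codimension-one distribution ξ with γ̂ = e^λ γ and X̂ = e^{−λ} X + U where λ ∈ C^∞(L) and U is a section of ξ. Then for every section V of ξ: (ι_{X̂} dγ̂)(V) = (ι_X dγ)(V) − dλ(V). -/
/-- Let (γ, X) and (γ̂, X̂) be DGLA defining couples for the same
integrable codimension-one distribution ξ with γ̂ = e^λ γ and X̂ = e^{−λ} X + U,
U a section of ξ. Then for every section V of ξ: (ι_{X̂} dγ̂)(V) = (ι_X dγ)(V) − dλ(V).
(Here u = e^λ, v = e^{−λ}, u·v = 1, d(e^λ) = e^λ dλ; the interior products are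
computed through the Koszul formula dω(A,B) = A(ω(B)) − B(ω(A)) − ω([A,B]).) -/
theorem stmt_19 {R : Type*} [CommRing R] [Algebra ℝ R]
    {g : Type*} [AddCommGroup g] [Module R g]
    (act : g → Derivation ℝ R R) (bracket : g → g → g)
    (hskew : ∀ v w, bracket v w = - bracket w v)
    (hadd : ∀ u v w, bracket (u + v) w = bracket u w + bracket v w)
    (hleib : ∀ (a : R) (v w : g), bracket (a • v) w = a • bracket v w - (act w a) • v)
    (γ : g →ₗ[R] R) (X : g) (hX : γ X = 1)
    -- ξ = ker γ is integrable (Frobenius)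
    (hint : ∀ v w, γ v = 0 → γ w = 0 → γ (bracket v w) = 0)
    (lam u v : R) (huv : u * v = 1)                -- u = e^λ, v = e^{−λ}
    (hdu : ∀ w : g, act w u = u * act w lam)       -- d(e^λ) = e^λ dλ
    (U : g) (hU : γ U = 0)
    (V : g) (hV : γ V = 0) :
    act (v • X + U) ((u • γ) V) - act V ((u • γ) (v • X + U))
        - (u • γ) (bracket (v • X + U) V)
      = (act X (γ V) - act V (γ X) - γ (bracket X V)) - act V lam := by
  have hsm : ∀ w : g, (u • γ) w = u * γ w := fun w => rfl
  have hγb : γ (bracket (v • X + U) V)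
      = v * γ (bracket X V) - act V v := by
    rw [hadd, hleib, map_add, map_sub, map_smul, map_smul, hX,
      hint U V hU hV, smul_eq_mul, smul_eq_mul, mul_one, add_zero]
  have hder : u * act V v + v * act V u = 0 := by
    have h := (act V).leibniz u v
    rw [huv] at h
    have h1 : act V (1 : R) = 0 := Derivation.map_one_eq_zero _
    rw [h1] at h
    have := h.symm
    simpa [smul_eq_mul, mul_comm] using this
  have huav : u * act V v = - act V lam := by
    have := hder
    rw [hdu V] at this
    have huv' : v * u = 1 := by rw [mul_comm]; exact huv
    linear_combination this - (act V) lam * huv'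
  have h0 : (u • γ) V = 0 := by rw [hsm, hV, mul_zero]
  have h1 : (u • γ) (v • X + U) = 1 := by
    rw [hsm, map_add, map_smul, hX, hU, smul_eq_mul, mul_one, add_zero, huv]
  rw [h0, h1, hsm, hγb, (act _).map_zero, Derivation.map_one_eq_zero, hV,
    (act X).map_zero, hX, Derivation.map_one_eq_zero]
  linear_combination huav - γ (bracket X V) * huv
end
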